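/- arXiv:2005.01998 — 4 statements merged into one kernel-verified Lean document; each statement's English description precedes it below -/
import Mathlib

section
/- Let Φ = (G, 𝕋, φ) be a complex unit gain graph and μ(G) the matching number of its underlying simple graph G. Then the energy of Φ satisfies 𝓔(Φ) ≥ 2μ(G). -/
open Matrix

variable {V : Type*}

/-- A gain function on `G` with values in the circle group `𝕋 ⊆ ℂ`:
each ordered pair of adjacent vertices gets a unit complex number, and
reversing the pair inverts the gain. -/
structure IsGain (G : SimpleGraph V) (φ : V → V → ℂ) : Prop where
  unit : ∀ u v, G.Adj u v → ‖φ u v‖ = 1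
  inv : ∀ u v, G.Adj u v → φ v u = (φ u v)⁻¹

/-- The adjacency matrix of the complex unit gain graph `(G, 𝕋, φ)`. -/
noncomputable def gainAdj (G : SimpleGraph V) (φ : V → V → ℂ) : Matrix V V ℂ :=
  fun u v => @ite _ (G.Adj u v) (Classical.dec _) (φ u v) 0

theorem IsGain.isHermitian {G : SimpleGraph V} {φ : V → V → ℂ} (hg : IsGain G φ) :
    (gainAdj G φ).IsHermitian := by
  ext u v
  simp only [conjTranspose_apply, gainAdj]
  by_cases h : G.Adj u v
  · rw [if_pos h.symm, if_pos h, hg.inv u v h, Complex.inv_eq_conj (hg.unit u v h)]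
    simp
  · rw [if_neg (fun h' => h h'.symm), if_neg h]
    simp

/-- The energy of a complex unit gain graph: the sum of the absolute values of the
eigenvalues of its (Hermitian) adjacency matrix. -/
noncomputable def gainEnergy [Fintype V] [DecidableEq V] (G : SimpleGraph V) (φ : V → V → ℂ)
    (hg : IsGain G φ) : ℝ :=
  ∑ i, |hg.isHermitian.eigenvalues i|

/-- `M` is a matching of `G`: a set of edges of `G`, pairwise sharing no vertex. -/
def IsGraphMatching (G : SimpleGraph V) (M : Finset (Sym2 V)) : Prop :=
  (↑M : Set (Sym2 V)) ⊆ G.edgeSet ∧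
    ∀ e ∈ M, ∀ f ∈ M, e ≠ f → ∀ v : V, v ∈ e → v ∉ f

/-- The matching number of `G`: the largest size of a matching. -/
noncomputable def matchingNumber (G : SimpleGraph V) : ℕ :=
  sSup {n | ∃ M : Finset (Sym2 V), IsGraphMatching G M ∧ M.card = n}

/-- The gain of a walk: the product of the gains along its darts. -/
def walkGain {G : SimpleGraph V} (φ : V → V → ℂ) {u v : V} (w : G.Walk u v) : ℂ :=
  (w.darts.map fun d => φ d.toProd.1 d.toProd.2).prod

/-- A complex unit gain graph is balanced if every cycle has gain `1`. -/
def IsBalanced (G : SimpleGraph V) (φ : V → V → ℂ) : Prop :=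
  ∀ (v : V) (w : G.Walk v v), w.IsCycle → walkGain φ w = 1

theorem IsGain.anti {G H : SimpleGraph V} {φ : V → V → ℂ} (hg : IsGain G φ) (hle : H ≤ G) :
    IsGain H φ :=
  ⟨fun u v h => hg.unit u v (hle h), fun u v h => hg.inv u v (hle h)⟩

theorem IsGain.induce {G : SimpleGraph V} {φ : V → V → ℂ} (hg : IsGain G φ) (s : Set V) :
    IsGain (G.induce s) (fun a b => φ a b) :=
  ⟨fun u v h => hg.unit u v h, fun u v h => hg.inv u v h⟩

/-!
Let `M` be a maximum matching and `B` the gain adjacency matrix of the spanning subgraph with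
edge set `M`. Since `φ(u,v) φ(v,u) = 1`, `tr(A(Φ) B) = 2|M|`. Writing `A(Φ) = ∑ λᵢ vᵢ vᵢ*` with
orthonormal eigenvectors gives `tr(A(Φ) B) = ∑ λᵢ vᵢ* B vᵢ`, and `|x* B x| ≤ ‖x‖²` for every `x`
because each vertex meets at most one edge of `M` (use `2|x_u x_v| ≤ |x_u|² + |x_v|²`).
Hence `2|M| ≤ ∑ |λᵢ| = 𝓔(Φ)`.
-/

namespace Matrix.IsHermitian

variable {𝕜 n : Type*} [RCLike 𝕜] [Fintype n] [DecidableEq n] {A : Matrix n n 𝕜}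

theorem trace_mul_eq_sum_eigenvalues_mul (hA : A.IsHermitian) (B : Matrix n n 𝕜) :
    (A * B).trace = ∑ i, (hA.eigenvalues i : 𝕜) *
      (star ⇑(hA.eigenvectorBasis i) ⬝ᵥ B *ᵥ ⇑(hA.eigenvectorBasis i)) := by
  conv_lhs => rw [hA.spectral_theorem, Unitary.conjStarAlgAut_apply, Matrix.mul_assoc,
    Matrix.mul_assoc, trace_mul_comm, Matrix.mul_assoc]
  simp only [trace, diag, diagonal_mul, Function.comp_apply]
  refine Finset.sum_congr rfl fun i _ => ?_
  congr 1
  rw [dotProduct_mulVec]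
  simp [Matrix.mul_apply, dotProduct, vecMul]

theorem norm_trace_mul_le (hA : A.IsHermitian) {B : Matrix n n 𝕜} {c : ℝ}
    (hB : ∀ x : n → 𝕜, ‖star x ⬝ᵥ B *ᵥ x‖ ≤ c * ∑ i, ‖x i‖ ^ 2) :
    ‖(A * B).trace‖ ≤ c * ∑ i, |hA.eigenvalues i| := by
  rw [trace_mul_eq_sum_eigenvalues_mul, Finset.mul_sum]
  refine (norm_sum_le _ _).trans (Finset.sum_le_sum fun i _ => ?_)
  have hunit : ∑ j, ‖hA.eigenvectorBasis i j‖ ^ 2 = 1 := by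
    rw [← EuclideanSpace.norm_sq_eq, hA.eigenvectorBasis.orthonormal.1 i, one_pow]
  rw [norm_mul, RCLike.norm_ofReal, mul_comm c]
  exact mul_le_mul_of_nonneg_left ((hB _).trans_eq (by rw [hunit, mul_one])) (abs_nonneg _)

end Matrix.IsHermitian

open Finset

namespace SimpleGraph

variable [Fintype V] (H : SimpleGraph V) [DecidableRel H.Adj]

theorem sum_sum_neighborFinset_mul_le_sum_degree_mul_sq (a : V → ℝ) :
    ∑ u, ∑ v ∈ H.neighborFinset u, a u * a v ≤ ∑ u, H.degree u * a u ^ 2 := by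
  have hswap : ∑ u, ∑ v ∈ H.neighborFinset u, a v ^ 2 = ∑ u, ∑ v ∈ H.neighborFinset u, a u ^ 2 :=
    Finset.sum_comm' (fun u v => by simp [adj_comm])
  calc ∑ u, ∑ v ∈ H.neighborFinset u, a u * a v
      ≤ ∑ u, ∑ v ∈ H.neighborFinset u, (a u ^ 2 + a v ^ 2) / 2 := by
        gcongr with u _ v _
        linarith [two_mul_le_add_sq (a u) (a v)]
    _ = ∑ u, H.degree u * a u ^ 2 := by
        simp only [add_div, sum_add_distrib, ← sum_div, hswap, sum_const,
          card_neighborFinset_eq_degree, nsmul_eq_mul]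
        ring

end SimpleGraph

theorem gainAdj_mulVec_apply [Fintype V] (G : SimpleGraph V) [DecidableRel G.Adj]
    (φ : V → V → ℂ) (x : V → ℂ) (u : V) :
    (gainAdj G φ *ᵥ x) u = ∑ v ∈ G.neighborFinset u, φ u v * x v := by
  simp [gainAdj, mulVec, dotProduct, ite_mul, SimpleGraph.neighborFinset_eq_filter, sum_filter]

namespace IsGain

variable {G : SimpleGraph V} {φ : V → V → ℂ}

theorem mul_swap_eq_one (hg : IsGain G φ) {u v : V} (h : G.Adj u v) : φ u v * φ v u = 1 := by
  rw [hg.inv u v h, mul_inv_cancel₀ (norm_ne_zero_iff.mp (by simp [hg.unit u v h]))]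

theorem norm_star_dotProduct_gainAdj_mulVec_le [Fintype V] [DecidableRel G.Adj]
    (hg : IsGain G φ) {Δ : ℕ} (hΔ : ∀ u, G.degree u ≤ Δ) (x : V → ℂ) :
    ‖star x ⬝ᵥ gainAdj G φ *ᵥ x‖ ≤ Δ * ∑ u, ‖x u‖ ^ 2 := by
  calc ‖star x ⬝ᵥ gainAdj G φ *ᵥ x‖
      ≤ ∑ u, ∑ v ∈ G.neighborFinset u, ‖x u‖ * ‖x v‖ := by
        simp only [dotProduct, gainAdj_mulVec_apply, Pi.star_apply, mul_sum]
        refine (norm_sum_le _ _).trans (sum_le_sum fun u _ => (norm_sum_le _ _).trans ?_)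
        refine sum_le_sum fun v hv => ?_
        rw [norm_mul, norm_mul, norm_star, hg.unit u v ((G.mem_neighborFinset u v).mp hv), one_mul]
    _ ≤ ∑ u, G.degree u * ‖x u‖ ^ 2 := G.sum_sum_neighborFinset_mul_le_sum_degree_mul_sq _
    _ ≤ Δ * ∑ u, ‖x u‖ ^ 2 := by
        rw [mul_sum]
        gcongr with u
        exact_mod_cast hΔ u

theorem trace_gainAdj_mul_gainAdj [Fintype V] {H : SimpleGraph V} [DecidableRel H.Adj]
    (hg : IsGain G φ) (hHG : H ≤ G) :
    (gainAdj G φ * gainAdj H φ).trace = 2 * H.edgeSet.ncard := by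
  classical
  have hentry : ∀ u v, gainAdj G φ u v * gainAdj H φ v u = if H.Adj u v then 1 else 0 := by
    intro u v
    by_cases h : H.Adj u v
    · simp [gainAdj, h, h.symm, hHG h, hg.mul_swap_eq_one (hHG h)]
    · have h' : ¬H.Adj v u := fun h' => h h'.symm
      simp [gainAdj, h, h']
  simp only [trace, Matrix.diag, Matrix.mul_apply, hentry, sum_boole,
    ← SimpleGraph.neighborFinset_eq_filter, SimpleGraph.card_neighborFinset_eq_degree]
  rw [← SimpleGraph.coe_edgeFinset, Set.ncard_coe_finset]
  exact_mod_cast H.sum_degrees_eq_twice_card_edges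

end IsGain

namespace IsGraphMatching

open SimpleGraph

variable {G : SimpleGraph V} {M : Finset (Sym2 V)}

theorem fromEdgeSet_le (hM : IsGraphMatching G M) : fromEdgeSet (M : Set (Sym2 V)) ≤ G :=
  (SimpleGraph.fromEdgeSet_le G).mpr (Set.sdiff_subset.trans hM.1)

theorem degree_fromEdgeSet_le_one [Fintype V] [DecidableRel (fromEdgeSet (M : Set (Sym2 V))).Adj]
    (hM : IsGraphMatching G M) (u : V) : (fromEdgeSet (M : Set (Sym2 V))).degree u ≤ 1 := by
  rw [← card_neighborFinset_eq_degree, card_le_one]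
  intro a ha b hb
  simp only [mem_neighborFinset, fromEdgeSet_adj, mem_coe] at ha hb
  by_contra hab
  exact hM.2 _ ha.1 _ hb.1 (fun h => hab (Sym2.congr_right.mp h)) u
    (Sym2.mem_mk_left u a) (Sym2.mem_mk_left u b)

theorem edgeSet_fromEdgeSet_eq (hM : IsGraphMatching G M) :
    (fromEdgeSet (M : Set (Sym2 V))).edgeSet = M := by
  rw [edgeSet_fromEdgeSet, sdiff_eq_left, Set.disjoint_left]
  exact fun e he => G.not_isDiag_of_mem_edgeSet (hM.1 he)

end IsGraphMatching

theorem exists_isGraphMatching_card_eq_matchingNumber [Finite V] (G : SimpleGraph V) :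
    ∃ M, IsGraphMatching G M ∧ #M = matchingNumber G := by
  have := Fintype.ofFinite V
  refine Nat.sSup_mem (s := {n | ∃ M : Finset (Sym2 V), IsGraphMatching G M ∧ #M = n})
    ⟨0, ∅, by simp [IsGraphMatching], rfl⟩ ⟨Fintype.card (Sym2 V), ?_⟩
  rintro n ⟨M, -, rfl⟩
  exact card_le_univ M

/-- the energy of a complex unit gain graph is at least twice the
matching number of its underlying graph. -/
theorem gainEnergy_ge_two_mul_matchingNumber [Fintype V] [DecidableEq V]
    (G : SimpleGraph V) (φ : V → V → ℂ) (hg : IsGain G φ) :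
    2 * (matchingNumber G : ℝ) ≤ gainEnergy G φ hg := by
  classical
  obtain ⟨M, hM, hcard⟩ := exists_isGraphMatching_card_eq_matchingNumber G
  set H := SimpleGraph.fromEdgeSet (M : Set (Sym2 V))
  have htrace : ‖(gainAdj G φ * gainAdj H φ).trace‖ = 2 * matchingNumber G := by
    rw [hg.trace_gainAdj_mul_gainAdj hM.fromEdgeSet_le, hM.edgeSet_fromEdgeSet_eq,
      Set.ncard_coe_finset, hcard]
    norm_cast
  have hquad := (hg.anti hM.fromEdgeSet_le).norm_star_dotProduct_gainAdj_mulVec_le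
    hM.degree_fromEdgeSet_le_one
  rw [← htrace]
  simpa [gainEnergy] using hg.isHermitian.norm_trace_mul_le hquad
end

section
/- Let Φ = (G, 𝕋, φ) be a complex unit gain graph and let S be an edge cut of G. Then 𝓔(G − S, 𝕋, φ) ≤ 𝓔(Φ), where (G − S, 𝕋, φ) is the complex unit gain graph obtained by deleting the edges of S from G and restricting the gain function. -/
/-!
If `D` is the diagonal `±1` matrix recording the side of the cut each vertex lies on, then
`2 A(Φ - S) = A(Φ) + D A(Φ) D`, since conjugating by `D` flips exactly the gains of the cut edges.
For a Hermitian `A` with eigenvalues `λᵢ`, `Re tr (A C) ≤ ∑ |λᵢ|` whenever `C = P diag(s) P*` with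
`P` unitary and `|sⱼ| ≤ 1`, with equality when `C` is the sign matrix of `A`. Pairing both sides
with the sign matrix of `A(Φ - S)` and using that `D A(Φ) D` is unitarily similar to `A(Φ)` gives
`2 𝓔(Φ - S) ≤ 2 𝓔(Φ)`.
-/

open Matrix

variable {V : Type*}

namespace Matrix

variable {n : Type*} [Fintype n] [DecidableEq n]

lemma sum_normSq_apply_of_mem_unitaryGroup {Q : Matrix n n ℂ} (hQ : Q ∈ unitaryGroup n ℂ)
    (i : n) : ∑ j, Complex.normSq (Q i j) = 1 := by
  have h := congr_fun (congr_fun (mem_unitaryGroup_iff.mp hQ) i) i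
  simp only [mul_apply, star_apply, Complex.star_def, Complex.mul_conj, one_apply_eq] at h
  exact_mod_cast h

lemma re_trace_diagonal_mul_unitary_conj_le {Q : Matrix n n ℂ} (hQ : Q ∈ unitaryGroup n ℂ)
    (l : n → ℝ) {s : n → ℂ} (hs : ∀ j, ‖s j‖ ≤ 1) :
    (diagonal (fun i => (l i : ℂ)) * (Q * diagonal s * star Q)).trace.re ≤ ∑ i, |l i| := by
  have hterm : ∀ i j,
      (l i * (Q i j * s j * star (Q i j))).re ≤ |l i| * Complex.normSq (Q i j) := by
    intro i j
    have hre : |(s j).re| ≤ 1 := (Complex.abs_re_le_norm _).trans (hs j)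
    have hnormSq : Q i j * s j * star (Q i j) = Complex.normSq (Q i j) * s j := by
      rw [mul_right_comm, Complex.star_def, Complex.mul_conj]
    calc (l i * (Q i j * s j * star (Q i j))).re = l i * (s j).re * Complex.normSq (Q i j) := by
          rw [hnormSq, Complex.re_ofReal_mul, Complex.re_ofReal_mul]; ring
      _ ≤ |l i * (s j).re| * Complex.normSq (Q i j) :=
          mul_le_mul_of_nonneg_right (le_abs_self _) (Complex.normSq_nonneg _)
      _ ≤ |l i| * Complex.normSq (Q i j) := by
          rw [abs_mul]
          exact mul_le_mul_of_nonneg_right (mul_le_of_le_one_right (abs_nonneg _) hre)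
            (Complex.normSq_nonneg _)
  calc (diagonal (fun i => (l i : ℂ)) * (Q * diagonal s * star Q)).trace.re
      = ∑ i, ∑ j, (l i * (Q i j * s j * star (Q i j))).re := by
        simp only [trace, diag_apply, diagonal_mul]
        simp only [mul_apply, star_apply, diagonal_apply, mul_ite, mul_zero,
          Finset.sum_ite_eq', Finset.mem_univ, if_true, Finset.mul_sum, Complex.re_sum]
    _ ≤ ∑ i, ∑ j, |l i| * Complex.normSq (Q i j) := by gcongr with i _ j _; exact hterm i j
    _ = ∑ i, |l i| := by
        simp only [← Finset.mul_sum, sum_normSq_apply_of_mem_unitaryGroup hQ, mul_one]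

namespace IsHermitian

variable {A : Matrix n n ℂ} (hA : A.IsHermitian)

lemma trace_mul_eq_trace_diagonal_mul (M : Matrix n n ℂ) :
    (A * M).trace = (diagonal (fun i => (hA.eigenvalues i : ℂ)) *
      (star (hA.eigenvectorUnitary : Matrix n n ℂ) * M * hA.eigenvectorUnitary)).trace := by
  conv_lhs => rw [hA.spectral_theorem, Unitary.conjStarAlgAut_apply]
  rw [Matrix.mul_assoc, Matrix.mul_assoc, trace_mul_comm]
  simp only [Matrix.mul_assoc]
  rfl

lemma re_trace_mul_unitary_conj_le {P : Matrix n n ℂ} (hP : P ∈ unitaryGroup n ℂ)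
    {s : n → ℂ} (hs : ∀ j, ‖s j‖ ≤ 1) :
    (A * (P * diagonal s * star P)).trace.re ≤ ∑ i, |hA.eigenvalues i| := by
  set U : Matrix n n ℂ := (hA.eigenvectorUnitary : Matrix n n ℂ)
  have hQ : star U * P ∈ unitaryGroup n ℂ :=
    mul_mem (Unitary.star_mem hA.eigenvectorUnitary.2) hP
  have hconj : star U * (P * diagonal s * star P) * U =
      (star U * P) * diagonal s * star (star U * P) := by
    simp only [star_mul, star_star, Matrix.mul_assoc]
  rw [hA.trace_mul_eq_trace_diagonal_mul, hconj]
  exact re_trace_diagonal_mul_unitary_conj_le hQ _ hs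

lemma trace_mul_sign_conj :
    (A * ((hA.eigenvectorUnitary : Matrix n n ℂ) *
      diagonal (fun i => ((SignType.sign (hA.eigenvalues i) : ℝ) : ℂ)) *
      star (hA.eigenvectorUnitary : Matrix n n ℂ))).trace = ∑ i, |hA.eigenvalues i| := by
  set U : Matrix n n ℂ := (hA.eigenvectorUnitary : Matrix n n ℂ)
  have hU : star U * U = 1 := Unitary.coe_star_mul_self _
  have hconj : ∀ S : Matrix n n ℂ, star U * (U * S * star U) * U = S := fun S => by
    rw [← Matrix.mul_assoc, ← Matrix.mul_assoc, hU, Matrix.one_mul, Matrix.mul_assoc, hU,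
      Matrix.mul_one]
  rw [hA.trace_mul_eq_trace_diagonal_mul, hconj, diagonal_mul_diagonal, trace_diagonal]
  push_cast
  simp only [← Complex.ofReal_mul, self_mul_sign]

lemma sum_abs_eigenvalues_le_of_add_self_eq {B D : Matrix n n ℂ} (hB : B.IsHermitian)
    (hD : D ∈ unitaryGroup n ℂ) (h : B + B = A + D * A * star D) :
    ∑ i, |hB.eigenvalues i| ≤ ∑ i, |hA.eigenvalues i| := by
  set U := hB.eigenvectorUnitary
  set s : n → ℂ := fun i => ((SignType.sign (hB.eigenvalues i) : ℝ) : ℂ)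
  set C : Matrix n n ℂ := U * diagonal s * star (U : Matrix n n ℂ)
  have hs : ∀ j, ‖s j‖ ≤ 1 := fun j => by
    rcases lt_trichotomy (hB.eigenvalues j) 0 with hj | hj | hj <;> simp [s, hj]
  have hAC : (A * C).trace.re ≤ ∑ i, |hA.eigenvalues i| :=
    hA.re_trace_mul_unitary_conj_le U.2 hs
  have hDADC : (D * A * star D * C).trace.re ≤ ∑ i, |hA.eigenvalues i| := by
    have hcycle : (D * A * star D * C).trace =
        (A * ((star D * U) * diagonal s * star (star D * U))).trace := by
      rw [Matrix.mul_assoc, Matrix.mul_assoc, trace_mul_comm]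
      simp only [C, star_mul, star_star, Matrix.mul_assoc]
    rw [hcycle]
    exact hA.re_trace_mul_unitary_conj_le (mul_mem (Unitary.star_mem hD) U.2) hs
  have hBC : ((B + B) * C).trace.re = 2 * ∑ i, |hB.eigenvalues i| := by
    rw [Matrix.add_mul, trace_add, hB.trace_mul_sign_conj, Complex.add_re, Complex.ofReal_re]
    ring
  have hsplit :
      ((B + B) * C).trace.re = (A * C).trace.re + (D * A * star D * C).trace.re := by
    rw [h, Matrix.add_mul, trace_add, Complex.add_re]
  linarith

end IsHermitian

end Matrix

section CutSign

open Classical in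
noncomputable def cutSign (W : Set V) (v : V) : ℂ :=
  if v ∈ W then 1 else -1

lemma star_cutSign (W : Set V) : star (cutSign W) = cutSign W := by
  ext v
  by_cases hv : v ∈ W <;> simp [cutSign, hv]

open Classical in
lemma cutSign_mul_cutSign (W : Set V) (u v : V) :
    cutSign W u * cutSign W v = if (u ∈ W ↔ v ∈ W) then 1 else -1 := by
  by_cases hu : u ∈ W <;> by_cases hv : v ∈ W <;> simp [cutSign, hu, hv]

variable [Fintype V] [DecidableEq V]

lemma diagonal_cutSign_mem_unitaryGroup (W : Set V) :
    diagonal (cutSign W) ∈ unitaryGroup V ℂ := by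
  rw [mem_unitaryGroup_iff, star_eq_conjTranspose, diagonal_conjTranspose, star_cutSign,
    diagonal_mul_diagonal, ← diagonal_one]
  congr 1
  ext v
  simpa using cutSign_mul_cutSign W v v

lemma gainAdj_deleteEdges_add_self {G : SimpleGraph V} (φ : V → V → ℂ) {S : Set (Sym2 V)}
    {W : Set V} (hcut : ∀ u v : V, s(u, v) ∈ S ↔ G.Adj u v ∧ (u ∈ W ↔ v ∉ W)) :
    gainAdj (G.deleteEdges S) φ + gainAdj (G.deleteEdges S) φ =
      gainAdj G φ + diagonal (cutSign W) * gainAdj G φ * star (diagonal (cutSign W)) := by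
  ext u v
  rw [star_eq_conjTranspose, diagonal_conjTranspose, star_cutSign, Matrix.add_apply,
    Matrix.add_apply, mul_diagonal, diagonal_mul, mul_right_comm, cutSign_mul_cutSign]
  by_cases hadj : G.Adj u v <;> by_cases hu : u ∈ W <;> by_cases hv : v ∈ W <;>
    simp [gainAdj, hadj, hu, hv, hcut]

end CutSign

theorem gainEnergy_deleteEdges_le_general [Fintype V] [DecidableEq V]
    (G : SimpleGraph V) (φ : V → V → ℂ) (hg : IsGain G φ)
    (S : Set (Sym2 V))
    (hcut : ∃ W : Set V, ∀ u v : V, s(u, v) ∈ S ↔ G.Adj u v ∧ (u ∈ W ↔ v ∉ W)) :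
    gainEnergy (G.deleteEdges S) φ (hg.anti (SimpleGraph.deleteEdges_le S)) ≤
      gainEnergy G φ hg := by
  obtain ⟨W, hW⟩ := hcut
  exact hg.isHermitian.sum_abs_eigenvalues_le_of_add_self_eq _
    (diagonal_cutSign_mem_unitaryGroup W) (gainAdj_deleteEdges_add_self φ hW)

/-- deleting an edge cut does not increase the energy of a complex unit
gain graph. -/
theorem gainEnergy_deleteEdges_le [Fintype V] [DecidableEq V]
    (G : SimpleGraph V) (φ : V → V → ℂ) (hg : IsGain G φ)
    (S : Set (Sym2 V)) (hne : S.Nonempty)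
    (hcut : ∃ W : Set V, ∀ u v : V, s(u, v) ∈ S ↔ G.Adj u v ∧ (u ∈ W ↔ v ∉ W)) :
    gainEnergy (G.deleteEdges S) φ (hg.anti (SimpleGraph.deleteEdges_le S)) ≤
      gainEnergy G φ hg :=
  gainEnergy_deleteEdges_le_general G φ hg S hcut
end

section
/- Let Φ = (G, 𝕋, φ) be a complex unit gain graph and let S be an edge cut of G such that the subgraph of G induced by the edge set S is a star (i.e., all edges of S share a common vertex). Then 𝓔(G − S, 𝕋, φ) < 𝓔(Φ). -/
open Matrix

variable {V : Type*}

/-!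
Write `B` for the adjacency matrix of `G − S` and `A = B + e yᴴ + y eᴴ`, where `e` is the basis
vector of the centre `c` of the star and `y` collects the gains of the edges of `S`. Since `S` is
an edge cut, `B` commutes with the diagonal projection `P` onto the side of `c`, while `P e = e`
and `P y = 0`.

Let `U` be the sign of `B` (taking the sign of `0` to be `1`): a Hermitian involution commuting with
`P`, with `tr (B U) = 𝓔(B)`. The perturbation contributes nothing to the trace, so
`tr (A U) = 𝓔(B)`. For unitary `U`, `re tr (A U) ≤ 𝓔(A)`, with equality only if `A U` is
positive semidefinite. So if `𝓔(A) ≤ 𝓔(B)`, then `A U` is Hermitian, `U` commutes with `A`, hence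
with `A - B`, which forces `U e = u e`. Then `eᴴ (A U) e = u eᴴ A e = 0`, so `A e = 0` by positivity;
but the component of `A e` off the side of `c` is `‖e‖² y ≠ 0`.
-/

open ComplexOrder

namespace Matrix

variable {n : Type*} [Fintype n] [DecidableEq n]

theorem IsHermitian.trace_cfc {B : Matrix n n ℂ} (hB : B.IsHermitian) (f : ℝ → ℝ) :
    trace (cfc f B) = ∑ i, (f (hB.eigenvalues i) : ℂ) := by
  rw [hB.cfc_eq, IsHermitian.cfc, Unitary.conjStarAlgAut_apply, trace_mul_cycle,
    Unitary.coe_star_mul_self, one_mul, trace_diagonal]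
  rfl

theorem IsHermitian.exists_involution_trace_mul_eq_sum_abs_eigenvalues {B : Matrix n n ℂ}
    (hB : B.IsHermitian) :
    ∃ U : Matrix n n ℂ, U.IsHermitian ∧ U * U = 1 ∧ (∀ P, Commute B P → Commute U P) ∧
      trace (B * U) = ∑ i, ((|hB.eigenvalues i| : ℝ) : ℂ) := by
  set s : ℝ → ℝ := fun t => if t < 0 then -1 else 1
  have hcont (f : ℝ → ℝ) : ContinuousOn f (spectrum ℝ B) := B.finite_real_spectrum.continuousOn f
  refine ⟨cfc s B, IsSelfAdjoint.cfc, ?_, fun P hP => hP.cfc_real s, ?_⟩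
  · rw [← cfc_mul s s B (hcont s) (hcont s), ← cfc_const_one ℝ B]
    exact cfc_congr fun t _ => by by_cases ht : t < 0 <;> simp [s, ht]
  · nth_rw 1 [← cfc_id' ℝ B]
    rw [← cfc_mul _ s B (hcont _) (hcont s), hB.trace_cfc]
    congr 1 with i
    by_cases hi : hB.eigenvalues i < 0 <;> simp [s, hi, abs_of_neg, abs_of_nonneg, not_lt.mp]

theorem row_eq_single_of_one_le_abs_re {W : Matrix n n ℂ} (hW : W ∈ unitaryGroup n ℂ) {i : n}
    (h : 1 ≤ |(W i i).re|) : W i = Pi.single i ((W i i).re : ℂ) := by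
  have hsum : ∑ j, Complex.normSq (W i j) = 1 := by
    have := congrFun₂ (mem_unitaryGroup_iff.mp hW) i i
    simp only [mul_apply, star_apply, one_apply_eq, RCLike.star_def, Complex.mul_conj] at this
    exact_mod_cast this
  have hre : 1 ≤ (W i i).re * (W i i).re := by
    nlinarith [abs_mul_abs_self (W i i).re, abs_nonneg (W i i).re]
  have hnorm : 1 ≤ Complex.normSq (W i i) := by
    rw [Complex.normSq_apply]
    nlinarith [mul_self_nonneg (W i i).im]
  have him : (W i i).im = 0 := by
    have : Complex.normSq (W i i) ≤ 1 :=
      hsum ▸ Finset.single_le_sum (fun j _ => Complex.normSq_nonneg (W i j)) (Finset.mem_univ i)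
    rw [Complex.normSq_apply] at this
    nlinarith [mul_self_nonneg (W i i).im]
  have hpair (j : n) (hj : j ≠ i) : Complex.normSq (W i i) + Complex.normSq (W i j) ≤ 1 := by
    rw [← hsum, ← Finset.sum_pair (f := fun k => Complex.normSq (W i k)) hj.symm]
    exact Finset.sum_le_sum_of_subset_of_nonneg (Finset.subset_univ _)
      fun _ _ _ => Complex.normSq_nonneg _
  ext j
  obtain rfl | hj := eq_or_ne j i
  · rw [Pi.single_eq_same]
    exact Complex.ext rfl (by simpa using him)
  · rw [Pi.single_eq_of_ne hj]
    refine Complex.normSq_eq_zero.mp (le_antisymm ?_ (Complex.normSq_nonneg _))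
    linarith [hpair j hj]

theorem IsHermitian.posSemidef_mul_of_sum_abs_eigenvalues_le_re_trace {A U : Matrix n n ℂ}
    (hA : A.IsHermitian) (hU : U ∈ unitaryGroup n ℂ)
    (h : ∑ i, |hA.eigenvalues i| ≤ (trace (A * U)).re) : (A * U).PosSemidef := by
  set V : Matrix n n ℂ := ↑hA.eigenvectorUnitary
  set l := hA.eigenvalues
  set W := star V * U * V
  have hV : V ∈ unitaryGroup n ℂ := hA.eigenvectorUnitary.prop
  have hW : W ∈ unitaryGroup n ℂ := mul_mem (mul_mem (Unitary.star_mem hV) hU) hV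
  have hAU : A * U = V * (diagonal (fun i => (l i : ℂ)) * W) * star V := by
    conv_lhs => rw [hA.spectral_theorem]
    simp only [Unitary.conjStarAlgAut_apply, W, mul_assoc, Unitary.mul_star_self_of_mem hV,
      mul_one]
    rfl
  have hle (i : n) : l i * (W i i).re ≤ |l i| :=
    calc l i * (W i i).re ≤ |l i| * |(W i i).re| := by rw [← abs_mul]; exact le_abs_self _
      _ ≤ |l i| * 1 := by
        gcongr
        exact (Complex.abs_re_le_norm _).trans (entry_norm_bound_of_unitary hW i i)
      _ = |l i| := mul_one _
  have htrace : (trace (A * U)).re = ∑ i, l i * (W i i).re := by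
    rw [hAU, trace_mul_cycle, Unitary.star_mul_self_of_mem hV, one_mul]
    simp [trace, diagonal_mul]
  have heq (i : n) : l i * (W i i).re = |l i| :=
    (Finset.sum_eq_sum_iff_of_le fun i _ => hle i).mp
      (le_antisymm (Finset.sum_le_sum fun i _ => hle i) (htrace ▸ h)) i (Finset.mem_univ i)
  have hDW : diagonal (fun i => (l i : ℂ)) * W = diagonal (fun i => ((|l i| : ℝ) : ℂ)) := by
    ext i j
    rw [diagonal_mul]
    obtain hi | hi := eq_or_ne (l i) 0
    · simp [hi, diagonal_apply]
    have hre : 1 ≤ |(W i i).re| := by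
      have := congrArg abs (heq i)
      rw [abs_mul, abs_abs, mul_eq_left₀ (abs_ne_zero.mpr hi)] at this
      exact this.ge
    rw [row_eq_single_of_one_le_abs_re hW hre]
    obtain rfl | hj := eq_or_ne j i
    · simp [← heq]
    · simp [hj, diagonal_apply_ne _ hj.symm]
  rw [hAU, hDW]
  exact (PosSemidef.diagonal fun i => by simp).mul_mul_conjTranspose_same V

omit [DecidableEq n] in
theorem IsHermitian.dotProduct_mulVec_eq_zero_of_commute {P U : Matrix n n ℂ}
    (hP : P.IsHermitian) (hUP : Commute U P) {x z : n → ℂ} {a b : ℝ}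
    (hx : P *ᵥ x = (a : ℂ) • x) (hz : P *ᵥ z = (b : ℂ) • z) (hab : a ≠ b) :
    star z ⬝ᵥ (U *ᵥ x) = 0 := by
  have ha : star z ⬝ᵥ (P *ᵥ (U *ᵥ x)) = a * (star z ⬝ᵥ (U *ᵥ x)) := by
    rw [mulVec_mulVec, ← hUP.eq, ← mulVec_mulVec, hx, mulVec_smul, dotProduct_smul, smul_eq_mul]
  have hb : star z ⬝ᵥ (P *ᵥ (U *ᵥ x)) = b * (star z ⬝ᵥ (U *ᵥ x)) := by
    rw [dotProduct_mulVec, ← hP.eq, ← star_mulVec, hz, star_smul, Complex.star_def,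
      Complex.conj_ofReal, smul_dotProduct, smul_eq_mul]
  have hab' : (a : ℂ) - b ≠ 0 := sub_ne_zero.mpr (Complex.ofReal_injective.ne hab)
  exact (mul_eq_zero.mp (by rw [sub_mul, ← ha, ← hb, sub_self])).resolve_left hab'

omit [DecidableEq n] in
theorem vecMulVec_add_vecMulVec_mulVec (e y x : n → ℂ) :
    (vecMulVec e (star y) + vecMulVec y (star e)) *ᵥ x =
      (star y ⬝ᵥ x) • e + (star e ⬝ᵥ x) • y := by
  simp [add_mulVec, vecMulVec_mulVec]

omit [DecidableEq n] in
theorem exists_mulVec_eq_smul_of_commute_vecMulVec {U : Matrix n n ℂ} {e y : n → ℂ}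
    (he : e ≠ 0) (hy : y ≠ 0) (hey : star e ⬝ᵥ y = 0) (hyUe : star y ⬝ᵥ (U *ᵥ e) = 0)
    (hU : Commute U (vecMulVec e (star y) + vecMulVec y (star e))) :
    ∃ u : ℂ, U *ᵥ e = u • e := by
  set C := vecMulVec e (star y) + vecMulVec y (star e)
  have hye : star y ⬝ᵥ e = 0 := by rw [star_dotProduct, hey, star_zero]
  have hne : star e ⬝ᵥ e ≠ 0 := fun h => he (dotProduct_star_self_eq_zero.mp h)
  have hny : star y ⬝ᵥ y ≠ 0 := fun h => hy (dotProduct_star_self_eq_zero.mp h)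
  have hcomm (x : n → ℂ) : U *ᵥ (C *ᵥ x) = C *ᵥ (U *ᵥ x) := by
    rw [mulVec_mulVec, mulVec_mulVec, hU.eq]
  -- `C e` is a multiple of `y` and `C y` one of `e`, so `U` preserves both lines.
  obtain ⟨u, hUy⟩ : ∃ u : ℂ, U *ᵥ y = u • y := by
    have := hcomm e
    rw [vecMulVec_add_vecMulVec_mulVec, vecMulVec_add_vecMulVec_mulVec, hye, hyUe, zero_smul,
      zero_add, zero_add, mulVec_smul] at this
    exact ⟨(star e ⬝ᵥ e)⁻¹ * star e ⬝ᵥ (U *ᵥ e), by rw [mul_smul, ← this, inv_smul_smul₀ hne]⟩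
  refine ⟨u, ?_⟩
  have := hcomm y
  rw [hUy, mulVec_smul, vecMulVec_add_vecMulVec_mulVec, hey, zero_smul, add_zero, mulVec_smul,
    smul_comm] at this
  exact smul_right_injective _ hny this

theorem mulVec_eq_zero_of_posSemidef_mul {A U : Matrix n n ℂ} (hUU : U * U = 1)
    (hAU : (A * U).PosSemidef) {e : n → ℂ} {u : ℂ} (hUe : U *ᵥ e = u • e)
    (hAe : star e ⬝ᵥ (A *ᵥ e) = 0) : A *ᵥ e = 0 := by
  have hAUe : (A * U) *ᵥ e = 0 := by
    refine (hAU.dotProduct_mulVec_zero_iff e).mp ?_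
    rw [← mulVec_mulVec, hUe, mulVec_smul, dotProduct_smul, hAe, smul_zero]
  rw [show A = A * U * U by rw [mul_assoc, hUU, mul_one], ← mulVec_mulVec, hUe, mulVec_smul,
    hAUe, smul_zero]

theorem IsHermitian.sum_abs_eigenvalues_lt_of_eq_add_vecMulVec {A B P : Matrix n n ℂ}
    (hA : A.IsHermitian) (hB : B.IsHermitian) (hP : P.IsHermitian) (hBP : Commute B P)
    {e y : n → ℂ} (hPe : P *ᵥ e = e) (hPy : P *ᵥ y = 0) (he : e ≠ 0) (hy : y ≠ 0)
    (hBe : star e ⬝ᵥ (B *ᵥ e) = 0)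
    (hAB : A = B + (vecMulVec e (star y) + vecMulVec y (star e))) :
    ∑ i, |hB.eigenvalues i| < ∑ i, |hA.eigenvalues i| := by
  set C := vecMulVec e (star y) + vecMulVec y (star e)
  obtain ⟨U, hUh, hUU, hU, htrB⟩ := hB.exists_involution_trace_mul_eq_sum_abs_eigenvalues
  have hPe' : P *ᵥ e = ((1 : ℝ) : ℂ) • e := by rw [hPe, Complex.ofReal_one, one_smul]
  have hPy' : P *ᵥ y = ((0 : ℝ) : ℂ) • y := by rw [hPy, Complex.ofReal_zero, zero_smul]
  have hyUe := hP.dotProduct_mulVec_eq_zero_of_commute (hU P hBP) hPe' hPy' one_ne_zero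
  have heUy := hP.dotProduct_mulVec_eq_zero_of_commute (hU P hBP) hPy' hPe' zero_ne_one
  have hey : star e ⬝ᵥ y = 0 := by
    simpa using hP.dotProduct_mulVec_eq_zero_of_commute (.one_left P) hPy' hPe' zero_ne_one
  have htrA : trace (A * U) = ∑ i, ((|hB.eigenvalues i| : ℝ) : ℂ) := by
    rw [hAB, add_mul, trace_add, htrB, add_eq_left, add_mul, trace_add, vecMulVec_mul,
      vecMulVec_mul, trace_vecMulVec, trace_vecMulVec, dotProduct_comm, ← dotProduct_mulVec,
      dotProduct_comm y, ← dotProduct_mulVec, hyUe, heUy, add_zero]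
  by_contra hle
  have hAU : (A * U).PosSemidef := by
    refine hA.posSemidef_mul_of_sum_abs_eigenvalues_le_re_trace
      (mem_unitaryGroup_iff.mpr (by rw [star_eq_conjTranspose, hUh.eq, hUU])) ?_
    rw [htrA]
    simpa using not_lt.mp hle
  have hUC : Commute U C := by
    rw [show C = A - B by rw [hAB]; abel]
    exact ((hA.commute_iff hUh).mpr hAU.1).symm.sub_right (hU B (Commute.refl B))
  obtain ⟨u, hUe⟩ := exists_mulVec_eq_smul_of_commute_vecMulVec he hy hey hyUe hUC
  have hAe_eq : A *ᵥ e = B *ᵥ e + (star e ⬝ᵥ e) • y := by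
    rw [hAB, add_mulVec, vecMulVec_add_vecMulVec_mulVec, star_dotProduct, hey, star_zero,
      zero_smul, zero_add]
  have hAe := mulVec_eq_zero_of_posSemidef_mul hUU hAU hUe (by
    rw [hAe_eq, dotProduct_add, dotProduct_smul, hBe, hey, smul_zero, add_zero])
  -- Applying `P` to `A e = B e + ‖e‖² y` removes the `y` term and fixes `B e`.
  have hBe0 : B *ᵥ e = 0 := by
    have := congrArg (P *ᵥ ·) hAe
    rwa [hAe_eq, mulVec_add, mulVec_smul, hPy, smul_zero, add_zero, mulVec_mulVec, ← hBP.eq,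
      ← mulVec_mulVec, hPe, mulVec_zero] at this
  rw [hAe_eq, hBe0, zero_add] at hAe
  exact hy ((smul_eq_zero.mp hAe).resolve_left fun h => he (dotProduct_star_self_eq_zero.mp h))

end Matrix

theorem commute_gainAdj_diagonal [Fintype V] [DecidableEq V] {G : SimpleGraph V}
    (φ : V → V → ℂ) {d : V → ℂ} (hd : ∀ u v, G.Adj u v → d u = d v) :
    Commute (gainAdj G φ) (diagonal d) := by
  ext u v
  rw [mul_diagonal, diagonal_mul, gainAdj]
  split_ifs with h
  · rw [hd u v h, mul_comm]
  · rw [zero_mul, mul_zero]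

noncomputable def starGainVec (S : Set (Sym2 V)) (φ : V → V → ℂ) (c : V) : V → ℂ :=
  fun v => @ite _ (s(v, c) ∈ S) (Classical.dec _) (φ v c) 0

theorem gainAdj_eq_deleteEdges_add_vecMulVec [Fintype V] [DecidableEq V] {G : SimpleGraph V}
    {φ : V → V → ℂ} (hg : IsGain G φ) {S : Set (Sym2 V)} (hSG : S ⊆ G.edgeSet) {c : V}
    (hc : ∀ e ∈ S, c ∈ e) :
    gainAdj G φ = gainAdj (G.deleteEdges S) φ +
      (vecMulVec (Pi.single c 1) (star (starGainVec S φ c)) +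
        vecMulVec (starGainVec S φ c) (star (Pi.single c 1))) := by
  classical
  ext u v
  have hloop (w : V) : s(w, w) ∉ S := fun h => G.loopless.irrefl w (hSG h)
  have hdel : gainAdj G φ u v =
      gainAdj (G.deleteEdges S) φ u v + if s(u, v) ∈ S then φ u v else 0 := by
    by_cases hS : s(u, v) ∈ S
    · rw [gainAdj, gainAdj, if_pos (show G.Adj u v from hSG hS),
        if_neg fun h => (SimpleGraph.deleteEdges_adj.mp h).2 hS, if_pos hS, zero_add]
    · rw [if_neg hS, add_zero, gainAdj, gainAdj]
      congr 1
      exact propext (by simp [hS])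
  rw [Matrix.add_apply, hdel]
  congr 1
  simp only [Matrix.add_apply, vecMulVec_apply, starGainVec, Pi.star_apply, Pi.single_apply]
  by_cases hS : s(u, v) ∈ S
  · have hadj : G.Adj u v := hSG hS
    rcases Sym2.mem_iff.mp (hc _ hS) with rfl | rfl
    · simp [hS, hadj.ne.symm, Sym2.eq_swap, hloop, hg.inv c v hadj,
        Complex.inv_eq_conj (hg.unit c v hadj)]
    · simp [hS, hadj.ne, hloop]
  · have hS' : s(v, u) ∉ S := by rwa [Sym2.eq_swap]
    by_cases hu : u = c <;> by_cases hv : v = c <;> simp_all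

theorem starGainVec_ne_zero {G : SimpleGraph V} {φ : V → V → ℂ} (hg : IsGain G φ)
    {S : Set (Sym2 V)} (hSG : S ⊆ G.edgeSet) {c v : V} (hv : s(v, c) ∈ S) :
    starGainVec S φ c ≠ 0 := by
  intro h
  have h0 := congrFun h v
  rw [starGainVec, if_pos hv, Pi.zero_apply] at h0
  simpa [h0] using hg.unit v c (hSG hv)

theorem diagonal_mulVec_starGainVec [Fintype V] [DecidableEq V] {S : Set (Sym2 V)}
    {φ : V → V → ℂ} {c : V} {d : V → ℂ} (hd : ∀ v, s(v, c) ∈ S → d v = 0) :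
    diagonal d *ᵥ starGainVec S φ c = 0 := by
  ext v
  rw [mulVec_diagonal, starGainVec, Pi.zero_apply]
  split_ifs with h
  · rw [hd v h, zero_mul]
  · rw [mul_zero]

/-- deleting an edge cut whose edges form a star (all share a common vertex)
strictly decreases the energy of a complex unit gain graph. -/
theorem gainEnergy_deleteEdges_lt_of_star [Fintype V] [DecidableEq V]
    (G : SimpleGraph V) (φ : V → V → ℂ) (hg : IsGain G φ)
    (S : Set (Sym2 V)) (hne : S.Nonempty)
    (hcut : ∃ W : Set V, ∀ u v : V, s(u, v) ∈ S ↔ G.Adj u v ∧ (u ∈ W ↔ v ∉ W))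
    (hstar : ∃ c : V, ∀ e ∈ S, c ∈ e) :
    gainEnergy (G.deleteEdges S) φ (hg.anti (SimpleGraph.deleteEdges_le S)) <
      gainEnergy G φ hg := by
  classical
  obtain ⟨W, hW⟩ := hcut
  obtain ⟨c, hc⟩ := hstar
  obtain ⟨_, hv⟩ := hne
  obtain ⟨v, rfl⟩ := Sym2.mem_iff_exists.mp (hc _ hv)
  have hSG : S ⊆ G.edgeSet := fun e he => by
    induction e using Sym2.ind with | _ u v => exact ((hW u v).mp he).1
  set d : V → ℂ := fun v => if (v ∈ W ↔ c ∈ W) then 1 else 0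
  refine IsHermitian.sum_abs_eigenvalues_lt_of_eq_add_vecMulVec _ _ (P := diagonal d)
    (isHermitian_diagonal_of_self_adjoint _ (by ext v; simp [d])) ?_ (by simp [d])
    (diagonal_mulVec_starGainVec fun v hv => if_neg (by have := ((hW v c).mp hv).2; tauto))
    (by simp) (starGainVec_ne_zero hg hSG (by rwa [Sym2.eq_swap])) (by simp [gainAdj])
    (gainAdj_eq_deleteEdges_add_vecMulVec hg hSG hc)
  refine commute_gainAdj_diagonal φ fun u v h => ?_
  have hadj := (SimpleGraph.deleteEdges_adj.mp h).1
  have := (hW u v).not.mp (SimpleGraph.deleteEdges_adj.mp h).2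
  simp only [d]
  congr 1
  exact propext (by tauto)
end

section
/- Let C̃₆ be the graph obtained from the 6-cycle v₁v₂v₃v₄v₅v₆v₁ by adding the chord v₂v₅. Then for every complex unit gain graph Φ = (C̃₆, 𝕋, φ) with underlying graph C̃₆, one has 𝓔(Φ) > 6. -/
open Matrix

variable {V : Type*}

/-- The graph obtained from the 6-cycle `v₁v₂v₃v₄v₅v₆v₁` (vertices `0,…,5`) by adding the
chord `v₂v₅` (i.e. `1 — 4`). -/
def tildeC6 : SimpleGraph (Fin 6) :=
  SimpleGraph.fromRel fun u v =>
    (u, v) ∈ ([(0, 1), (1, 2), (2, 3), (3, 4), (4, 5), (5, 0), (1, 4)] : List (Fin 6 × Fin 6))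

/-!
Let `A` be the gain adjacency matrix, with eigenvalues `λᵢ`, and `B` the ordinary adjacency
matrix of the underlying graph. Entrywise `‖(A ^ k) u v‖ ≤ (B ^ k) u v`, with equality for
`k = 1`, so `∑ λᵢ² = tr B² = 14` and `∑ λᵢ⁴ = ∑ ‖(A ^ 2) u v‖² ≤ tr B⁴ = 70`. Two applications of
Cauchy–Schwarz give `(∑ λᵢ²)³ ≤ 𝓔² ∑ λᵢ⁴`, hence `𝓔² ≥ 14³ / 70 > 36`.
-/

open Finset

theorem Finset.sum_sq_pow_three_le_sq_sum_abs_mul_sum_pow_four {ι : Type*} (s : Finset ι)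
    (x : ι → ℝ) :
    (∑ i ∈ s, x i ^ 2) ^ 3 ≤ (∑ i ∈ s, |x i|) ^ 2 * ∑ i ∈ s, x i ^ 4 := by
  set a := ∑ i ∈ s, |x i|
  set b := ∑ i ∈ s, |x i| ^ 3
  set q := ∑ i ∈ s, x i ^ 2
  set r := ∑ i ∈ s, x i ^ 4
  have hqab : q ^ 2 ≤ a * b :=
    sum_sq_le_sum_mul_sum_of_sq_le_mul s (fun i _ => abs_nonneg (x i))
      (fun i _ => by positivity) fun i _ => le_of_eq (by rw [← sq_abs (x i)]; ring)
  have hbqr : b ^ 2 ≤ q * r :=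
    sum_sq_le_sum_mul_sum_of_sq_le_mul s (fun i _ => sq_nonneg (x i))
      (fun i _ => by positivity) fun i _ =>
        le_of_eq (by rw [← pow_mul, Even.pow_abs ⟨3, rfl⟩]; ring)
  have hq : 0 ≤ q := by positivity
  have hq4 : q * q ^ 3 ≤ q * (a ^ 2 * r) :=
    calc q * q ^ 3 = (q ^ 2) ^ 2 := by ring
      _ ≤ (a * b) ^ 2 := by gcongr
      _ = a ^ 2 * b ^ 2 := by ring
      _ ≤ a ^ 2 * (q * r) := by gcongr
      _ = q * (a ^ 2 * r) := by ring
  rcases hq.eq_or_lt with hq0 | hqpos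
  · rw [← hq0, zero_pow three_ne_zero]
    exact mul_nonneg (sq_nonneg a) (sum_nonneg fun i _ => by positivity)
  · exact le_of_mul_le_mul_left hq4 hqpos

namespace Matrix

variable {n : Type*} [Fintype n] [DecidableEq n]

theorem norm_pow_apply_le_of_norm_apply_le {R : Type*} [SeminormedRing R] [NormOneClass R]
    {M : Matrix n n R} {N : Matrix n n ℝ} (h : ∀ u v, ‖M u v‖ ≤ N u v) (k : ℕ) (u v : n) :
    ‖(M ^ k) u v‖ ≤ (N ^ k) u v := by
  induction k generalizing v with
  | zero => by_cases huv : u = v <;> simp [huv]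
  | succ k ih =>
    rw [pow_succ, pow_succ, mul_apply, mul_apply]
    refine (norm_sum_le _ _).trans (sum_le_sum fun w _ => ?_)
    exact (norm_mul_le _ _).trans
      (mul_le_mul (ih w) (h w v) (norm_nonneg _) ((norm_nonneg _).trans (ih w)))

variable {𝕜 : Type*} [RCLike 𝕜] {A : Matrix n n 𝕜}

theorem IsHermitian.trace_pow (hA : A.IsHermitian) (k : ℕ) :
    (A ^ k).trace = ∑ i, (hA.eigenvalues i : 𝕜) ^ k := by
  conv_lhs => rw [hA.spectral_theorem]
  rw [← map_pow, Unitary.conjStarAlgAut_apply, trace_mul_cycle,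
    Unitary.coe_star_mul_self, one_mul, diagonal_pow, trace_diagonal]
  rfl

theorem IsHermitian.sum_eigenvalues_pow (hA : A.IsHermitian) (k : ℕ) :
    ∑ i, hA.eigenvalues i ^ k = RCLike.re (A ^ k).trace := by
  rw [hA.trace_pow]
  simp only [← RCLike.ofReal_pow, ← RCLike.ofReal_sum, RCLike.ofReal_re]

theorem IsHermitian.re_trace_sq (hA : A.IsHermitian) :
    RCLike.re (A ^ 2).trace = ∑ u, ∑ v, ‖A u v‖ ^ 2 := by
  have h : ∀ u v, A u v * A v u = (‖A u v‖ ^ 2 : ℝ) := fun u v => by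
    rw [← hA.apply v u, RCLike.star_def, RCLike.mul_conj, RCLike.ofReal_pow]
  simp only [pow_two A, trace, diag_apply, mul_apply, h, ← RCLike.ofReal_sum, RCLike.ofReal_re]

end Matrix

theorem SimpleGraph.trace_adjMatrix_pow_eq_natCast [Fintype V] [DecidableEq V]
    (G : SimpleGraph V) [DecidableRel G.Adj] (R : Type*) [Semiring R] (k : ℕ) :
    (G.adjMatrix R ^ k).trace = ((G.adjMatrix ℕ ^ k).trace : R) := by
  simp only [trace, diag_apply, adjMatrix_pow_apply_eq_card_walk, Nat.cast_sum, Nat.cast_id]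

namespace IsGain

variable {G : SimpleGraph V} [DecidableRel G.Adj] {φ : V → V → ℂ}

theorem norm_gainAdj_apply (hg : IsGain G φ) (u v : V) :
    ‖gainAdj G φ u v‖ = G.adjMatrix ℝ u v := by
  by_cases h : G.Adj u v
  · simp [gainAdj, SimpleGraph.adjMatrix_apply, h, hg.unit u v h]
  · simp [gainAdj, SimpleGraph.adjMatrix_apply, h]

variable [Fintype V] [DecidableEq V]

theorem sum_eigenvalues_sq (hg : IsGain G φ) :
    ∑ i, hg.isHermitian.eigenvalues i ^ 2 = (G.adjMatrix ℝ ^ 2).trace := by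
  have hB : (G.adjMatrix ℝ).IsHermitian := isHermitian_iff_isSymm.mpr G.isSymm_adjMatrix
  rw [hg.isHermitian.sum_eigenvalues_pow, hg.isHermitian.re_trace_sq,
    ← RCLike.re_to_real (x := trace _), hB.re_trace_sq]
  simp [norm_gainAdj_apply hg, SimpleGraph.adjMatrix_apply, apply_ite]

theorem sum_eigenvalues_pow_two_mul_le (hg : IsGain G φ) (k : ℕ) :
    ∑ i, hg.isHermitian.eigenvalues i ^ (2 * k) ≤ (G.adjMatrix ℝ ^ (2 * k)).trace := by
  have hB : (G.adjMatrix ℝ).IsHermitian := isHermitian_iff_isSymm.mpr G.isSymm_adjMatrix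
  rw [hg.isHermitian.sum_eigenvalues_pow, ← RCLike.re_to_real (x := trace _), pow_mul',
    pow_mul', (hg.isHermitian.pow k).re_trace_sq, (hB.pow k).re_trace_sq]
  gcongr with u _ v _
  exact (norm_pow_apply_le_of_norm_apply_le (fun u v => (norm_gainAdj_apply hg u v).le) k u v).trans
    (Real.le_norm_self _)

theorem trace_adjMatrix_sq_pow_three_le (hg : IsGain G φ) :
    (G.adjMatrix ℝ ^ 2).trace ^ 3 ≤ gainEnergy G φ hg ^ 2 * (G.adjMatrix ℝ ^ 4).trace := by
  rw [← hg.sum_eigenvalues_sq]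
  calc _ ≤ gainEnergy G φ hg ^ 2 * ∑ i, hg.isHermitian.eigenvalues i ^ 4 :=
        Finset.sum_sq_pow_three_le_sq_sum_abs_mul_sum_pow_four _ _
    _ ≤ _ := by gcongr; exact hg.sum_eigenvalues_pow_two_mul_le 2

end IsGain

instance : DecidableRel tildeC6.Adj := fun u v =>
  decidable_of_iff _ (SimpleGraph.fromRel_adj _ u v).symm

theorem tildeC6_trace_adjMatrix_sq : (tildeC6.adjMatrix ℝ ^ 2).trace = 14 := by
  rw [tildeC6.trace_adjMatrix_pow_eq_natCast]
  exact_mod_cast (by decide : (tildeC6.adjMatrix ℕ ^ 2).trace = 14)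

theorem tildeC6_trace_adjMatrix_pow_four : (tildeC6.adjMatrix ℝ ^ 4).trace = 70 := by
  rw [tildeC6.trace_adjMatrix_pow_eq_natCast]
  exact_mod_cast (by decide : (tildeC6.adjMatrix ℕ ^ 4).trace = 70)

/-- every complex unit gain graph with underlying graph `tildeC6` has energy
strictly greater than `6`. -/
theorem gainEnergy_tildeC6_gt_six (φ : Fin 6 → Fin 6 → ℂ) (hg : IsGain tildeC6 φ) :
    6 < gainEnergy tildeC6 φ hg := by
  have h := hg.trace_adjMatrix_sq_pow_three_le
  rw [tildeC6_trace_adjMatrix_sq, tildeC6_trace_adjMatrix_pow_four] at h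
  have h0 : 0 ≤ gainEnergy tildeC6 φ hg := sum_nonneg fun i _ => abs_nonneg _
  nlinarith
end
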